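/- arXiv:1303.3810 — 6 statements merged into one kernel-verified Lean document; each statement's English description precedes it below -/
import Mathlib

section
/- Define T = (ℕ × ℕ) ∪ {x, y} (with x, y two distinct points not in ℕ × ℕ) with topology τ generated by the base consisting of: (i) singletons {(m,n)} for (m,n) ∈ ℕ × ℕ, (ii) sets T \ A where A ⊆ (ℕ × ℕ) ∪ {y} contains y and A meets each row {(m,n) : n ∈ ℕ} in a finite set, and (iii) sets T \ B where B ⊆ (ℕ × ℕ) ∪ {x} contains x and B ∩ (ℕ × ℕ) is contained in finitely many rows. Then (T, τ) is a compact topological space. -/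
/-!
A neighbourhood of `x` omits only finitely many points of each row, and a neighbourhood of `y`
omits points of only finitely many rows, so a set that is a neighbourhood of both `x` and `y` has
finite complement. Every open cover therefore has two members covering all but finitely many
points, and finitely many more members cover the rest.
-/

/-- The underlying set `T = (ℕ × ℕ) ∪ {x, y}`: lattice points are `Sum.inl`,
`x = Sum.inr true`, `y = Sum.inr false`. -/
abbrev ArensT := (ℕ × ℕ) ⊕ Bool

/-- The base for the topology on `T`: (i) singletons of lattice points, (ii) complements
`T \ A` where `A ⊆ (ℕ × ℕ) ∪ {y}` contains `y` and meets each row finitely, and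
(iii) complements `T \ B` where `B ⊆ (ℕ × ℕ) ∪ {x}` contains `x` and meets only
finitely many rows. -/
def arensBase : Set (Set ArensT) :=
  {s | (∃ p : ℕ × ℕ, s = {Sum.inl p}) ∨
    (∃ A : Set ArensT, s = Aᶜ ∧ Sum.inr false ∈ A ∧ Sum.inr true ∉ A ∧
      ∀ m : ℕ, {n : ℕ | Sum.inl (m, n) ∈ A}.Finite) ∨
    (∃ B : Set ArensT, s = Bᶜ ∧ Sum.inr true ∈ B ∧ Sum.inr false ∉ B ∧
      ∃ M : ℕ, ∀ m n : ℕ, Sum.inl (m, n) ∈ B → m ≤ M)}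

/-- The topology `τ` generated by this base. -/
def arensTop : TopologicalSpace ArensT := TopologicalSpace.generateFrom arensBase

open Filter Set Topology

theorem CompactSpace.of_cofinite_le_nhdsSet {X : Type*} [TopologicalSpace X] {K : Set X}
    (hK : IsCompact K) (hKnhds : cofinite ≤ 𝓝ˢ K) : CompactSpace X := by
  refine ⟨fun f _ _ => ?_⟩
  by_cases hfK : Disjoint (𝓝ˢ K) f
  · obtain ⟨s, hsf, hs⟩ := disjoint_cofinite_left.1 (hfK.mono_left hKnhds)
    obtain ⟨x, -, hx⟩ := hs.isCompact (le_principal_iff.2 hsf)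
    exact ⟨x, mem_univ x, hx⟩
  · obtain ⟨x, -, hx⟩ : ∃ x ∈ K, ¬Disjoint (𝓝 x) f := by
      simpa [hK.disjoint_nhdsSet_left] using hfK
    exact ⟨x, mem_univ x, clusterPt_iff_not_disjoint.2 hx⟩

theorem Filter.cofinite_le_comap_fst_sup_iSup_map_mk {α β : Type*} :
    (cofinite : Filter (α × β)) ≤ comap Prod.fst cofinite ⊔ ⨆ a, map (Prod.mk a) cofinite := by
  intro s ⟨hfst, hrows⟩
  obtain ⟨t, ht, hts⟩ := mem_comap.1 hfst
  rw [mem_iSup] at hrows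
  rw [mem_cofinite] at ht ⊢
  refine Finite.of_finite_fibers Prod.fst (ht.subset ?_) fun a _ => ?_
  · rintro _ ⟨p, hp, rfl⟩ hpt
    exact hp (hts hpt)
  · refine ((mem_cofinite.1 (mem_map.1 (hrows a))).image (Prod.mk a)).subset ?_
    rintro ⟨a', b⟩ ⟨hb, rfl : a' = a⟩
    exact ⟨b, hb, rfl⟩

theorem arens_map_inl_le_nhds_x :
    map Sum.inl (⨆ m, map (Prod.mk m) cofinite) ≤ @nhds ArensT arensTop (Sum.inr true) := by
  rw [arensTop, TopologicalSpace.nhds_generateFrom]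
  refine le_iInf₂ fun s ⟨hxs, hs⟩ => le_principal_iff.2 ?_
  rcases hs with ⟨p, rfl⟩ | ⟨A, rfl, -, -, hA⟩ | ⟨B, rfl, hB, -, -⟩
  · simp at hxs
  · exact mem_iSup.2 fun m => (hA m).compl_mem_cofinite
  · exact absurd hB hxs

theorem arens_map_inl_le_nhds_y :
    map Sum.inl (comap Prod.fst cofinite) ≤ @nhds ArensT arensTop (Sum.inr false) := by
  rw [arensTop, TopologicalSpace.nhds_generateFrom]
  refine le_iInf₂ fun s ⟨hys, hs⟩ => le_principal_iff.2 ?_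
  rcases hs with ⟨p, rfl⟩ | ⟨A, rfl, hA, -, -⟩ | ⟨B, rfl, -, -, M, hM⟩
  · simp at hys
  · exact absurd hA hys
  · refine mem_comap.2 ⟨(Iic M)ᶜ, (finite_Iic M).compl_mem_cofinite, ?_⟩
    rintro ⟨m, n⟩ hm hB
    exact hm (hM m n hB)

theorem arens_cofinite_le_nhdsSet :
    cofinite ≤ @nhdsSet ArensT arensTop {Sum.inr true, Sum.inr false} := by
  let := arensTop
  intro s hs
  rw [nhdsSet_insert, nhdsSet_singleton, mem_sup] at hs
  obtain ⟨hx, hy⟩ := hs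
  have hlattice : Sum.inl ⁻¹' s ∈ (cofinite : Filter (ℕ × ℕ)) :=
    cofinite_le_comap_fst_sup_iSup_map_mk ⟨arens_map_inl_le_nhds_y hy, arens_map_inl_le_nhds_x hx⟩
  rw [mem_cofinite] at hlattice ⊢
  refine finite_of_finite_preimage hlattice ?_
  rintro (p | (_ | _)) hp
  · exact mem_range_self p
  · exact absurd (mem_of_mem_nhds hy) hp
  · exact absurd (mem_of_mem_nhds hx) hp

theorem arens_compact : @CompactSpace ArensT arensTop :=
  let := arensTop
  .of_cofinite_le_nhdsSet (toFinite _).isCompact arens_cofinite_le_nhdsSet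
end

section
/- The space (T, τ) defined as (ℕ × ℕ) ∪ {x, y} with the topology where lattice points are isolated, neighborhoods of x are complements of sets containing y with finitely many points per row, and neighborhoods of y are complements of sets containing x meeting only finitely many rows, is not a Hausdorff space: the points x and y cannot be separated by disjoint open sets. -/
/-! Viewed on the lattice, every neighbourhood of `x` contains all but finitely many points of
each row (it lies in `⊤.curry cofinite`), and every neighbourhood of `y` contains all rows beyond
some index (it lies in `comap Prod.fst atTop`). The proper filter `atTop.curry cofinite` is
finer than both, so a neighbourhood of `x` and one of `y` always meet in a far-out row. -/

open Filter Topology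

namespace Filter

variable {α β : Type*}

theorem curry_mono_left {l l' : Filter α} (h : l ≤ l') (m : Filter β) :
    l.curry m ≤ l'.curry m :=
  fun _ hs => h hs

theorem curry_le_comap_fst (l : Filter α) (m : Filter β) : l.curry m ≤ comap Prod.fst l :=
  curry_le_prod.trans tendsto_fst.le_comap

instance curry.instNeBot (l : Filter α) (m : Filter β) [NeBot l] [NeBot m] : NeBot (l.curry m) :=
  frequently_true_iff_neBot _ |>.mp <| (frequently_curry_iff _).mpr <|
    Frequently.of_forall fun _ => Frequently.of_forall fun _ => trivial

end Filter

attribute [local instance] arensTop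

theorem map_inl_curry_cofinite_le_nhds_x :
    map Sum.inl ((⊤ : Filter ℕ).curry cofinite) ≤ 𝓝 (Sum.inr true : ArensT) := by
  refine (le_iInf₂ fun s ⟨hxs, hs⟩ => le_principal_iff.mpr ?_).trans_eq
    TopologicalSpace.nhds_generateFrom.symm
  rcases hs with ⟨p, rfl⟩ | ⟨A, rfl, -, -, hA⟩ | ⟨B, rfl, hxB, -, -⟩
  · simp at hxs
  · exact mem_map.mpr <| mem_curry_iff.mpr <| eventually_top.mpr fun m => (hA m).compl_mem_cofinite
  · exact absurd hxB hxs

theorem map_inl_comap_fst_atTop_le_nhds_y :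
    map Sum.inl (comap Prod.fst atTop) ≤ 𝓝 (Sum.inr false : ArensT) := by
  refine (le_iInf₂ fun s ⟨hys, hs⟩ => le_principal_iff.mpr ?_).trans_eq
    TopologicalSpace.nhds_generateFrom.symm
  rcases hs with ⟨p, rfl⟩ | ⟨A, rfl, hyA, -, -⟩ | ⟨B, rfl, -, -, M, hB⟩
  · simp at hys
  · exact absurd hyA hys
  · exact ⟨Set.Ioi M, Ioi_mem_atTop M, fun p hp hpB => (hB p.1 p.2 hpB).not_gt hp⟩

theorem not_disjoint_nhds_arens_x_y :
    ¬ Disjoint (𝓝 (Sum.inr true : ArensT)) (𝓝 (Sum.inr false)) := by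
  intro h
  have hrows := h.mono map_inl_curry_cofinite_le_nhds_x map_inl_comap_fst_atTop_le_nhds_y
  rw [disjoint_map Sum.inl_injective] at hrows
  exact NeBot.ne inferInstance <| disjoint_self.mp <|
    hrows.mono (curry_mono_left le_top _) (curry_le_comap_fst atTop (cofinite : Filter ℕ))

theorem arens_not_hausdorff :
    ¬ ∃ U V : Set ArensT, arensTop.IsOpen U ∧ arensTop.IsOpen V ∧
      Sum.inr true ∈ U ∧ Sum.inr false ∈ V ∧ Disjoint U V := by
  rintro ⟨U, V, hU, hV, hxU, hyV, hUV⟩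
  exact not_disjoint_nhds_arens_x_y <|
    Filter.disjoint_iff.mpr ⟨U, IsOpen.mem_nhds hU hxU, V, IsOpen.mem_nhds hV hyV, hUV⟩
end

section
/- In the space (T, τ) = (ℕ × ℕ) ∪ {x, y} with the topology described (lattice points isolated, neighborhoods of x complements of row-finite sets containing y, neighborhoods of y complements of sets containing x meeting finitely many rows), every compact subset is closed. -/
/-!
Lattice points are isolated, so if `K` is compact, `C` is closed and `K ∩ C` consists of lattice
points, then `K ∩ C` is finite. If `x ∉ K`, taking `C = {x} ∪ row m` shows that `K` meets each row
finitely, so `K ∪ {y}` is a basic closed set missing `x`. If `y ∉ K`, taking for `C` the point `y`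
together with one point of `K` from each row that `K` meets shows that `K` meets only finitely many
rows, so `K ∪ {x}` is a basic closed set missing `y`.
-/

attribute [local instance] arensTop

open Set

namespace ArensT

lemma isOpen_of_mem_arensBase {s : Set ArensT} (hs : s ∈ arensBase) : IsOpen s :=
  TopologicalSpace.isOpen_generateFrom_of_mem hs

lemma isOpen_singleton_inl (p : ℕ × ℕ) : IsOpen ({Sum.inl p} : Set ArensT) :=
  isOpen_of_mem_arensBase (Or.inl ⟨p, rfl⟩)

lemma isClosed_of_rows_finite {A : Set ArensT} (hy : Sum.inr false ∈ A)
    (hx : Sum.inr true ∉ A) (hA : ∀ m : ℕ, {n : ℕ | Sum.inl (m, n) ∈ A}.Finite) :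
    IsClosed A :=
  isOpen_compl_iff.1 <| isOpen_of_mem_arensBase <| Or.inr <| Or.inl ⟨A, rfl, hy, hx, hA⟩

lemma isClosed_of_rows_bounded {B : Set ArensT} (hx : Sum.inr true ∈ B)
    (hy : Sum.inr false ∉ B) (hB : ∃ M : ℕ, ∀ m n : ℕ, Sum.inl (m, n) ∈ B → m ≤ M) :
    IsClosed B :=
  isOpen_compl_iff.1 <| isOpen_of_mem_arensBase <| Or.inr <| Or.inr ⟨B, rfl, hx, hy, hB⟩

lemma isDiscrete_range_inl : IsDiscrete (range (Sum.inl : ℕ × ℕ → ArensT)) :=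
  isDiscrete_iff_forall_mem_exists_isOpen.2 <| by
    rintro _ ⟨p, rfl⟩
    exact ⟨{Sum.inl p}, isOpen_singleton_inl p, inter_eq_left.2 (singleton_subset_iff.2 ⟨p, rfl⟩)⟩

lemma finite_inter_of_isCompact_of_isClosed {K C : Set ArensT} (hK : IsCompact K)
    (hC : IsClosed C) (h : K ∩ C ⊆ range Sum.inl) : (K ∩ C).Finite :=
  (hK.inter_right hC).finite (isDiscrete_range_inl.mono h)

lemma rows_finite_of_isCompact {K : Set ArensT} (hK : IsCompact K) (hx : Sum.inr true ∉ K)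
    (m : ℕ) : {n : ℕ | Sum.inl (m, n) ∈ K}.Finite := by
  set R : Set ArensT := insert (Sum.inr true) (range fun n => Sum.inl (m, n))
  have hR : IsClosed R := isClosed_of_rows_bounded (mem_insert _ _) (by simp [R])
    ⟨m, fun m' n h => by simp_all [R]⟩
  have hKR : (K ∩ R).Finite := finite_inter_of_isCompact_of_isClosed hK hR <| by
    rintro _ ⟨hzK, rfl | ⟨n, rfl⟩⟩
    · exact absurd hzK hx
    · exact ⟨_, rfl⟩
  have hinj : Function.Injective fun n : ℕ => (Sum.inl (m, n) : ArensT) :=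
    Sum.inl_injective.comp (Prod.mk_right_injective m)
  exact (hKR.preimage hinj.injOn).subset fun n hn => ⟨hn, Or.inr ⟨n, rfl⟩⟩

lemma rows_bounded_of_isCompact {K : Set ArensT} (hK : IsCompact K) (hy : Sum.inr false ∉ K) :
    ∃ M : ℕ, ∀ m n : ℕ, Sum.inl (m, n) ∈ K → m ≤ M := by
  choose! f hf using fun m (h : ∃ n, Sum.inl (m, n) ∈ K) => h
  set G : Set ArensT := insert (Sum.inr false) (range fun m => Sum.inl (m, f m))
  have hG : IsClosed G := isClosed_of_rows_finite (mem_insert _ _) (by simp [G]) fun m =>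
    (finite_singleton (f m)).subset fun n hn => by simp_all [G]
  have hKG : (K ∩ G).Finite := finite_inter_of_isCompact_of_isClosed hK hG <| by
    rintro _ ⟨hzK, rfl | ⟨m, rfl⟩⟩
    · exact absurd hzK hy
    · exact ⟨_, rfl⟩
  have hinj : Function.Injective fun m : ℕ => (Sum.inl (m, f m) : ArensT) :=
    fun m m' h => (Prod.mk.inj (Sum.inl_injective h)).1
  have hrows : {m : ℕ | ∃ n, Sum.inl (m, n) ∈ K}.Finite :=
    (hKG.preimage hinj.injOn).subset fun m hm => ⟨hf m hm, Or.inr ⟨m, rfl⟩⟩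
  obtain ⟨M, hM⟩ := hrows.bddAbove
  exact ⟨M, fun m n h => hM ⟨n, h⟩⟩

end ArensT

open ArensT in
theorem arens_compact_isClosed :
    ∀ K : Set ArensT, @IsCompact ArensT arensTop K → @IsClosed ArensT arensTop K := by
  intro K hK
  rw [← isOpen_compl_iff, isOpen_iff_forall_mem_open]
  rintro (p | _ | _) hz
  · exact ⟨{Sum.inl p}, singleton_subset_iff.2 hz, isOpen_singleton_inl p, rfl⟩
  · have hB : IsClosed (insert (Sum.inr true) K) :=
      isClosed_of_rows_bounded (mem_insert _ _) (by simpa using hz)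
        (by simpa using rows_bounded_of_isCompact hK hz)
    exact ⟨_, compl_subset_compl.2 (subset_insert _ _), hB.isOpen_compl, by simpa using hz⟩
  · have hA : IsClosed (insert (Sum.inr false) K) :=
      isClosed_of_rows_finite (mem_insert _ _) (by simpa using hz)
        (by simpa using rows_finite_of_isCompact hK hz)
    exact ⟨_, compl_subset_compl.2 (subset_insert _ _), hA.isOpen_compl, by simpa using hz⟩
end

section
/- There exists a compact, countably infinite topological space (T, τ) which is not the continuous image of Cantor's ternary set; i.e., there is no continuous surjection f : C → T, where C is Cantor's ternary set with the subspace topology from ℝ. -/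
/-- Cantor's ternary set `C = { Σ_{n ≥ 1} ω_n / 3^n : ω_n ∈ {0, 2} }`, as a subset of `ℝ`
with the Euclidean (subspace) topology. -/
def cantorC : Set ℝ :=
  {x | ∃ ω : ℕ → ℝ, (∀ n, ω n = 0 ∨ ω n = 2) ∧ HasSum (fun n => ω n / 3 ^ (n + 1)) x}

/-!
The witness is the one-point compactification `ℚ∞` of `ℚ`. Let `f : C → ℚ∞` be a continuous
surjection and `y ∈ ℚ`. By normality of `C` there is an open `V` with
`f⁻¹{y} ⊆ V ⊆ closure V ⊆ f⁻¹ ℚ`, so `f (closure V)` is a compact subset of `ℚ`. It is a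
neighbourhood of `y`: otherwise pick `r n → y` outside it and `x n` with `f (x n) = r n`; a
subsequence of `x` converges to some `a`, and `f a = y` because a sequence of `ℚ` converging in
`ℚ` cannot converge to `∞` (together with its limit it is a compact subset of `ℚ`). Then `x n ∈ V`
eventually, a contradiction. Hence `ℚ` would be locally compact, which it is not.
-/

open Set Filter Topology OnePoint

theorem cantorC_eq_cantorSet : cantorC = cantorSet := by
  rw [cantorSet_eq_zero_two_ofDigits]
  ext x
  constructor
  · rintro ⟨ω, hω, hsum⟩
    refine ⟨fun n => if ω n = 0 then 0 else 2, fun n => by dsimp only; split_ifs <;> decide, ?_⟩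
    rw [← hsum.tsum_eq, Real.ofDigits]
    refine tsum_congr fun n => ?_
    rcases hω n with h | h <;> simp [Real.ofDigitsTerm, h, div_eq_mul_inv]
  · rintro ⟨a, ha, rfl⟩
    refine ⟨fun n => ((a n : ℕ) : ℝ), fun n => ?_, ?_⟩
    · have hdigit : a n = 0 ∨ a n = 2 := by
        have := ha n
        omega
      rcases hdigit with h | h <;> simp [h]
    · have hterm : (fun n => ((a n : ℕ) : ℝ) / 3 ^ (n + 1)) = Real.ofDigitsTerm a := by
        ext n
        simp [Real.ofDigitsTerm, div_eq_mul_inv]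
      rw [hterm]
      exact Real.summable_ofDigitsTerm.hasSum

namespace OnePoint

variable {X Y : Type*} [TopologicalSpace X] [TopologicalSpace Y]

theorem eq_coe_of_tendsto_coe [T2Space Y] {u : ℕ → Y} {y : Y} {z : OnePoint Y}
    (hu : Tendsto u atTop (𝓝 y)) (hz : Tendsto (fun n => (u n : OnePoint Y)) atTop (𝓝 z)) :
    z = y := by
  induction z using OnePoint.rec with
  | infty =>
    have hK := hu.isCompact_insert_range
    have hnhds : ((↑) '' insert y (range u))ᶜ ∈ 𝓝 (∞ : OnePoint Y) :=
      (isOpen_compl_image_coe.mpr ⟨hK.isClosed, hK⟩).mem_nhds infty_notMem_image_coe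
    obtain ⟨n, hn⟩ := (hz.eventually hnhds).exists
    exact absurd ⟨u n, Or.inr ⟨n, rfl⟩, rfl⟩ hn
  | coe y' =>
    have : Tendsto u atTop (𝓝 y') := isOpenEmbedding_coe.isEmbedding.tendsto_nhds_iff.mpr hz
    rw [tendsto_nhds_unique this hu]

theorem coe_preimage_image_mem_nhds [SeqCompactSpace X] [T2Space Y] [FrechetUrysohnSpace Y]
    {f : X → OnePoint Y} (hf : Continuous f) (hsurj : Function.Surjective f) {V : Set X}
    (hV : IsOpen V) {y : Y} (hyV : f ⁻¹' {(y : OnePoint Y)} ⊆ V) :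
    (↑) ⁻¹' (f '' V) ∈ 𝓝 y := by
  by_contra hs
  have hy : y ∈ closure ((↑) ⁻¹' (f '' V))ᶜ := by
    rwa [closure_compl, mem_compl_iff, mem_interior_iff_mem_nhds]
  obtain ⟨r, hrV, hry⟩ := mem_closure_iff_seq_limit.mp hy
  choose x hx using fun n => hsurj (r n)
  obtain ⟨a, φ, hφ, hxa⟩ := SeqCompactSpace.tendsto_subseq x
  have hfa : f a = y := by
    refine eq_coe_of_tendsto_coe (hry.comp hφ.tendsto_atTop) ?_
    simpa [Function.comp_def, hx] using (hf.tendsto a).comp hxa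
  obtain ⟨n, hn⟩ := (hxa.eventually (hV.mem_nhds (hyV hfa))).exists
  exact hrV (φ n) ⟨x (φ n), hn, hx _⟩

theorem weaklyLocallyCompactSpace_of_surjective [CompactSpace X] [NormalSpace X]
    [SeqCompactSpace X] [T2Space Y] [FrechetUrysohnSpace Y] {f : X → OnePoint Y}
    (hf : Continuous f) (hsurj : Function.Surjective f) : WeaklyLocallyCompactSpace Y := by
  refine ⟨fun y => ?_⟩
  obtain ⟨V, hV, hyV, hVℚ⟩ := normal_exists_closure_subset (isClosed_singleton.preimage hf)
    (isOpen_range_coe.preimage hf) (preimage_mono (singleton_subset_iff.mpr (mem_range_self y)))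
  refine ⟨(↑) ⁻¹' (f '' closure V), ?_, ?_⟩
  · exact isOpenEmbedding_coe.isInducing.isCompact_preimage'
      (isClosed_closure.isCompact.image hf) (image_subset_iff.mpr hVℚ)
  · exact mem_of_superset (coe_preimage_image_mem_nhds hf hsurj hV hyV)
      (preimage_mono (image_mono subset_closure))

end OnePoint

theorem Rat.not_weaklyLocallyCompactSpace : ¬ WeaklyLocallyCompactSpace ℚ := by
  intro
  obtain ⟨s, hs, hs0⟩ := exists_compact_mem_nhds (0 : ℚ)
  simpa [Rat.interior_compact_eq_empty hs] using mem_interior_iff_mem_nhds.mpr hs0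

theorem exists_compact_countably_infinite_not_image_of_cantor :
    ∃ (T : Type) (τ : TopologicalSpace T), @CompactSpace T τ ∧ Countable T ∧ Infinite T ∧
      ¬ ∃ f : cantorC → T, @Continuous _ _ _ τ f ∧ Function.Surjective f := by
  refine ⟨OnePoint ℚ, inferInstance, inferInstance, inferInstanceAs (Countable (Option ℚ)),
    inferInstance, ?_⟩
  rintro ⟨f, hf, hsurj⟩
  have : CompactSpace cantorC :=
    isCompact_iff_compactSpace.mp (cantorC_eq_cantorSet ▸ isCompact_cantorSet)
  exact Rat.not_weaklyLocallyCompactSpace (weaklyLocallyCompactSpace_of_surjective hf hsurj)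
end

section
/- If X is a compact normal topological space in which every singleton is closed, Y is a topological space in which every compact subset is closed, and f : X → Y is a continuous surjection, then Y is Hausdorff. -/
/-! Since `X` is compact, every closed subset of `X` is compact, so its image is compact and hence
closed in `Y`: `f` is a closed map. A continuous closed surjection carries normality from `X` to
`Y`, and `Y` is T₁ because its points are compact. A normal T₁ space is Hausdorff. -/

open Set

theorem Continuous.isClosedMap_of_forall_isCompact_isClosed {X Y : Type*} [TopologicalSpace X]
    [CompactSpace X] [TopologicalSpace Y] (hY : ∀ K : Set Y, IsCompact K → IsClosed K)
    {f : X → Y} (hf : Continuous f) : IsClosedMap f :=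
  fun _ hC => hY _ (hC.isCompact.image hf)

theorem IsClosedMap.normalSpace_of_surjective {X Y : Type*} [TopologicalSpace X] [NormalSpace X]
    [TopologicalSpace Y] {f : X → Y} (hf : Continuous f) (hcl : IsClosedMap f)
    (hsurj : Function.Surjective f) : NormalSpace Y where
  normal s t hs ht hst := by
    obtain ⟨U, V, hU, hV, hsU, htV, hUV⟩ :=
      normal_separation (hs.preimage hf) (ht.preimage hf) (hst.preimage f)
    refine ⟨kernImage f U, kernImage f V, isClosedMap_iff_kernImage.1 hcl hU,
      isClosedMap_iff_kernImage.1 hcl hV, subset_kernImage_iff.2 hsU, subset_kernImage_iff.2 htV, ?_⟩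
    rw [disjoint_iff, ← Set.preimage_kernImage.u_inf, hUV.eq_bot, bot_eq_empty, kernImage_empty,
      hsurj.range_eq, compl_univ, bot_eq_empty]

theorem t2_of_kc_image_general {X Y : Type*} [TopologicalSpace X] [CompactSpace X] [NormalSpace X]
    [TopologicalSpace Y]
    (hY : ∀ K : Set Y, IsCompact K → IsClosed K)
    (f : X → Y) (hf : Continuous f) (hsurj : Function.Surjective f) : T2Space Y := by
  have : NormalSpace Y :=
    (hf.isClosedMap_of_forall_isCompact_isClosed hY).normalSpace_of_surjective hf hsurj
  have : T1Space Y := ⟨fun _ => hY _ isCompact_singleton⟩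
  infer_instance

theorem t2_of_kc_image {X Y : Type*} [TopologicalSpace X] [CompactSpace X] [NormalSpace X]
    (hX : ∀ x : X, IsClosed ({x} : Set X)) [TopologicalSpace Y]
    (hY : ∀ K : Set Y, IsCompact K → IsClosed K)
    (f : X → Y) (hf : Continuous f) (hsurj : Function.Surjective f) : T2Space Y :=
  t2_of_kc_image_general hY f hf hsurj
end

section
/- Every compact countably infinite Hausdorff space is second-countable. -/
/-!
A Hausdorff topology coarser than a compact topology coincides with it, since the identity map
from a compact space to a Hausdorff space is a homeomorphism. In a countable Hausdorff space,
choosing a pair of disjoint open sets for each of the countably many pairs of distinct points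
gives a countable family of open sets that already generates a Hausdorff topology; this topology
is second countable and coarser than the given one, hence equal to it.
-/

open TopologicalSpace

theorem TopologicalSpace.eq_of_le_of_compactSpace_of_t2Space {X : Type*}
    {t t' : TopologicalSpace X} [hc : @CompactSpace X t] [ht : @T2Space X t'] (h : t ≤ t') :
    t = t' :=
  le_antisymm h <| (@continuous_id_iff_le X t' t).mp <|
    @Continuous.continuous_symm_of_equiv_compact_to_t2 X X t t' hc ht (Equiv.refl X)
      (continuous_id_of_le h)

theorem TopologicalSpace.exists_countable_isOpen_t2Space_generateFrom (X : Type*)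
    [TopologicalSpace X] [T2Space X] [Countable X] :
    ∃ S : Set (Set X), S.Countable ∧ (∀ s ∈ S, IsOpen s) ∧ @T2Space X (generateFrom S) := by
  choose u v hu hv hxu hyv huv using fun (x y : X) (h : x ≠ y) ↦ t2_separation h
  refine ⟨⋃ (x) (y) (h : x ≠ y), {u x y h, v x y h}, ?_, ?_, ?_⟩
  · exact Set.countable_iUnion fun x ↦ Set.countable_iUnion fun y ↦
      Set.countable_iUnion fun h ↦ (Set.toFinite _).countable
  · simp only [Set.mem_iUnion, Set.mem_insert_iff, Set.mem_singleton_iff]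
    rintro s ⟨x, y, h, rfl | rfl⟩
    exacts [hu x y h, hv x y h]
  · refine @T2Space.mk X (generateFrom _) fun x y h ↦
      ⟨u x y h, v x y h, .basic _ ?_, .basic _ ?_, hxu x y h, hyv x y h, huv x y h⟩ <;>
    simp only [Set.mem_iUnion, Set.mem_insert_iff, Set.mem_singleton_iff] <;>
    exact ⟨x, y, h, by simp⟩

theorem secondCountable_of_compact_countable_t2_general {X : Type*} [TopologicalSpace X]
    [CompactSpace X] [T2Space X] [Countable X] :
    SecondCountableTopology X := by
  obtain ⟨S, hS, hSopen, hT2⟩ := exists_countable_isOpen_t2Space_generateFrom X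
  rw [eq_of_le_of_compactSpace_of_t2Space (le_generateFrom hSopen)]
  exact SecondCountableTopology.mk' hS

theorem secondCountable_of_compact_countable_t2 {X : Type*} [TopologicalSpace X]
    [CompactSpace X] [T2Space X] [Countable X] [Infinite X] :
    SecondCountableTopology X :=
  secondCountable_of_compact_countable_t2_general
end
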